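/- arXiv:1704.01546 — 4 statements merged into one kernel-verified Lean document; each statement's English description precedes it below -/
import Mathlib

section
/- Let f: [0,1] → ℝ be nonnegative and integrable, and let k, ℓ ∈ ℤ with 0 ≤ k ≤ ℓ. Let E_k f and E_ℓ f denote the dyadic martingale averages at scales 2^{-k} and 2^{-ℓ} respectively. Then ∫_0^1 f · (E_k f) · (E_ℓ f) ≥ (∫_0^1 f)³. -/
open MeasureTheory Set

/-- Dyadic martingale average at scale `2^(-k)`. -/
noncomputable def dyadicAvg (k : ℤ) (f : ℝ → ℝ) (x : ℝ) : ℝ :=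
  (2 : ℝ) ^ k * ∫ y in Set.Ico ((2 : ℝ) ^ (-k) * ⌊(2 : ℝ) ^ k * x⌋)
      ((2 : ℝ) ^ (-k) * (⌊(2 : ℝ) ^ k * x⌋ + 1)), f y

/-! Let `K ≤ L`. On a dyadic interval `I` of length `2^(-L)`, `E_L f` equals `2^L a_I` with
`a_I = ∫_I f`, and `E_K f` equals `2^K A_J`, where `J ⊇ I` has length `2^(-K)` and
`A_J = ∑_{I ⊆ J} a_I`. So the trilinear integral is `2^K 2^L ∑_J A_J ∑_{I ⊆ J} a_I²`.
Cauchy–Schwarz gives `∑_{I ⊆ J} a_I² ≥ 2^(K-L) A_J²`, and the power mean inequality gives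
`∑_J A_J³ ≥ 2^(-2K) (∑_J A_J)³ = 2^(-2K) (∫ f)³`. -/

noncomputable def dyadicInterval (k q : ℤ) : Set ℝ :=
  Ico ((2 : ℝ) ^ (-k) * q) ((2 : ℝ) ^ (-k) * (q + 1))

lemma mem_dyadicInterval {k q : ℤ} {x : ℝ} :
    x ∈ dyadicInterval k q ↔ (q : ℝ) ≤ 2 ^ k * x ∧ 2 ^ k * x < q + 1 := by
  rw [dyadicInterval, zpow_neg, mem_Ico, inv_mul_le_iff₀ (by positivity),
    lt_inv_mul_iff₀ (by positivity)]

lemma floor_eq_of_mem_dyadicInterval {k q : ℤ} {x : ℝ} (hx : x ∈ dyadicInterval k q) :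
    ⌊(2 : ℝ) ^ k * x⌋ = q := by
  rw [Int.floor_eq_iff]
  exact mem_dyadicInterval.1 hx

lemma dyadicInterval_subset (k q : ℤ) {M j : ℕ} (hj : j < 2 ^ M) :
    dyadicInterval (k + M) (2 ^ M * q + j) ⊆ dyadicInterval k q := by
  intro x hx
  have hj' : (j : ℝ) + 1 ≤ 2 ^ M := by exact_mod_cast hj
  have hM : (0 : ℝ) < 2 ^ M := by positivity
  rw [mem_dyadicInterval, zpow_add₀ two_ne_zero, zpow_natCast] at hx
  push_cast at hx
  rw [mem_dyadicInterval]
  constructor <;> nlinarith [hx.1, hx.2, (j.cast_nonneg : (0 : ℝ) ≤ j)]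

lemma dyadicAvg_eq_of_mem {k q : ℤ} {x : ℝ} (hx : x ∈ dyadicInterval k q) (f : ℝ → ℝ) :
    dyadicAvg k f x = 2 ^ k * ∫ y in dyadicInterval k q, f y := by
  rw [← floor_eq_of_mem_dyadicInterval hx]
  rfl

lemma measurable_dyadicAvg (k : ℤ) (f : ℝ → ℝ) : Measurable (dyadicAvg k f) :=
  measurable_from_top.comp (Int.measurable_floor.comp (measurable_const_mul ((2 : ℝ) ^ k)))
    (g := fun q : ℤ => (2 : ℝ) ^ k * ∫ y in dyadicInterval k q, f y)

lemma norm_dyadicAvg_le {f : ℝ → ℝ} (hf : Integrable f) (k : ℤ) (x : ℝ) :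
    ‖dyadicAvg k f x‖ ≤ 2 ^ k * ∫ y, ‖f y‖ := by
  rw [dyadicAvg, norm_mul, Real.norm_of_nonneg (by positivity)]
  gcongr
  exact (norm_integral_le_integral_norm _).trans
    (setIntegral_le_integral hf.norm (ae_of_all _ fun y => norm_nonneg _))

lemma MeasureTheory.Integrable.mul_dyadicAvg {μ : Measure ℝ} {g f : ℝ → ℝ}
    (hg : Integrable g μ) (hf : Integrable f) (k : ℤ) : Integrable (fun x => g x * dyadicAvg k f x) μ :=
  hg.mul_bdd (measurable_dyadicAvg k f).aestronglyMeasurable (ae_of_all _ (norm_dyadicAvg_le hf k))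

section Splitting

variable {E : Type*} [NormedAddCommGroup E] [NormedSpace ℝ E] {μ : Measure ℝ} {f : ℝ → E}

lemma setIntegral_Ico_eq_sum {b c : ℝ} (hc : 0 ≤ c) (n : ℕ)
    (hf : IntegrableOn f (Ico b (b + c * n)) μ) :
    ∫ x in Ico b (b + c * n), f x ∂μ =
      ∑ i ∈ Finset.range n, ∫ x in Ico (b + c * i) (b + c * (i + 1)), f x ∂μ := by
  induction n with
  | zero => simp
  | succ n ih =>
    have h₁ : b ≤ b + c * n := by nlinarith [(n.cast_nonneg : (0 : ℝ) ≤ n)]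
    have h₂ : b + c * n ≤ b + c * (n + 1 : ℕ) := by push_cast; nlinarith
    push_cast at hf ⊢
    rw [← Ico_union_Ico_eq_Ico h₁ (by exact_mod_cast h₂),
      setIntegral_union Ico_disjoint_Ico_same measurableSet_Ico
        (hf.mono_set (Ico_subset_Ico_right (by exact_mod_cast h₂)))
        (hf.mono_set (Ico_subset_Ico_left h₁)),
      ih (hf.mono_set (Ico_subset_Ico_right (by exact_mod_cast h₂))), Finset.sum_range_succ]

lemma setIntegral_dyadicInterval_eq_sum (k q : ℤ) (M : ℕ)
    (hf : IntegrableOn f (dyadicInterval k q) μ) :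
    ∫ x in dyadicInterval k q, f x ∂μ =
      ∑ j ∈ Finset.range (2 ^ M), ∫ x in dyadicInterval (k + M) (2 ^ M * q + j), f x ∂μ := by
  have hscale : (2 : ℝ) ^ (-k) = 2 ^ (-(k + M)) * 2 ^ M := by
    rw [neg_add, zpow_add₀ two_ne_zero, zpow_neg (a := (2 : ℝ)) (M : ℤ), zpow_natCast,
      inv_mul_cancel_right₀ (by positivity)]
  have hend : dyadicInterval k q = Ico ((2 : ℝ) ^ (-k) * q)
      ((2 : ℝ) ^ (-k) * q + 2 ^ (-(k + M)) * ((2 ^ M : ℕ) : ℝ)) := by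
    rw [dyadicInterval, hscale]; push_cast; ring_nf
  rw [hend] at hf ⊢
  rw [setIntegral_Ico_eq_sum (by positivity) _ hf]
  refine Finset.sum_congr rfl fun j _ => ?_
  rw [dyadicInterval, hscale]
  push_cast
  ring_nf

lemma setIntegral_Icc_zero_one_eq_sum_sum [NullSingletonClass μ]
    (hf : IntegrableOn f (Icc 0 1) μ) (K M : ℕ) :
    ∫ x in Icc 0 1, f x ∂μ = ∑ p ∈ Finset.range (2 ^ K), ∑ j ∈ Finset.range (2 ^ M),
      ∫ x in dyadicInterval (K + M) (2 ^ M * p + j), f x ∂μ := by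
  have hunit : dyadicInterval 0 0 = Ico 0 1 := by simp [dyadicInterval]
  have hf' : IntegrableOn f (dyadicInterval 0 0) μ := hunit ▸ hf.mono_set Ico_subset_Icc_self
  rw [← setIntegral_congr_set Ico_ae_eq_Icc, ← hunit,
    setIntegral_dyadicInterval_eq_sum 0 0 K hf']
  refine Finset.sum_congr rfl fun p hp => ?_
  simp only [zero_add, mul_zero]
  exact setIntegral_dyadicInterval_eq_sum _ _ M (hf'.mono_set (by
    simpa using dyadicInterval_subset 0 0 (Finset.mem_range.1 hp)))

end Splitting

lemma setIntegral_mul_dyadicAvg_mul_dyadicAvg (f : ℝ → ℝ) (k q : ℤ) {M j : ℕ} (hj : j < 2 ^ M) :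
    ∫ x in dyadicInterval (k + M) (2 ^ M * q + j),
        f x * dyadicAvg k f x * dyadicAvg (k + M) f x =
      2 ^ k * 2 ^ (k + M) * (∫ y in dyadicInterval k q, f y) *
        (∫ y in dyadicInterval (k + M) (2 ^ M * q + j), f y) ^ 2 := by
  rw [setIntegral_congr_fun measurableSet_Ico (s := dyadicInterval _ _) fun x hx => by
    rw [dyadicAvg_eq_of_mem hx, dyadicAvg_eq_of_mem (dyadicInterval_subset k q hj hx)],
    integral_mul_const, integral_mul_const]
  ring

lemma sum_sum_pow_three_le {ι κ : Type*} (s : Finset ι) (t : Finset κ) (a : ι → κ → ℝ)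
    (ha : ∀ i ∈ s, ∀ j ∈ t, 0 ≤ a i j) :
    (∑ i ∈ s, ∑ j ∈ t, a i j) ^ 3 ≤
      (s.card : ℝ) ^ 2 * t.card * ∑ i ∈ s, (∑ j ∈ t, a i j) * ∑ j ∈ t, a i j ^ 2 := by
  have hrow : ∀ i ∈ s, 0 ≤ ∑ j ∈ t, a i j := fun i hi => Finset.sum_nonneg (ha i hi)
  calc (∑ i ∈ s, ∑ j ∈ t, a i j) ^ 3
      ≤ (s.card : ℝ) ^ 2 * ∑ i ∈ s, (∑ j ∈ t, a i j) ^ 3 := pow_sum_le_card_mul_sum_pow hrow 2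
    _ ≤ (s.card : ℝ) ^ 2 * ∑ i ∈ s, (∑ j ∈ t, a i j) * (t.card * ∑ j ∈ t, a i j ^ 2) := by
        gcongr with i hi
        rw [pow_succ']
        exact mul_le_mul_of_nonneg_left sq_sum_le_card_mul_sum_sq (hrow i hi)
    _ = _ := by
        rw [Finset.mul_sum, Finset.mul_sum]
        exact Finset.sum_congr rfl fun i _ => by ring

theorem stmt1_general (f : ℝ → ℝ) (hnn : ∀ x, 0 ≤ f x) (hint : Integrable f)
    (k l : ℤ) (hk : 0 ≤ k) (hkl : k ≤ l) :
    (∫ x in Set.Icc (0 : ℝ) 1, f x) ^ 3 ≤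
      ∫ x in Set.Icc (0 : ℝ) 1, f x * dyadicAvg k f x * dyadicAvg l f x := by
  lift k to ℕ using hk with K
  obtain ⟨M, rfl⟩ := Int.le.dest hkl
  have hg : Integrable fun x => f x * dyadicAvg K f x * dyadicAvg (K + M) f x :=
    (hint.mul_dyadicAvg hint _).mul_dyadicAvg hint _
  rw [setIntegral_Icc_zero_one_eq_sum_sum hint.integrableOn K M,
    setIntegral_Icc_zero_one_eq_sum_sum hg.integrableOn K M]
  set a : ℕ → ℕ → ℝ := fun p j => ∫ y in dyadicInterval (K + M) (2 ^ M * p + j), f y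
  have ha : ∀ p j, 0 ≤ a p j := fun p j =>
    setIntegral_nonneg measurableSet_Ico fun y _ => hnn y
  calc (∑ p ∈ Finset.range (2 ^ K), ∑ j ∈ Finset.range (2 ^ M), a p j) ^ 3
      ≤ ((2 ^ K : ℕ) : ℝ) ^ 2 * (2 ^ M : ℕ) * ∑ p ∈ Finset.range (2 ^ K),
          (∑ j ∈ Finset.range (2 ^ M), a p j) * ∑ j ∈ Finset.range (2 ^ M), a p j ^ 2 := by
        simpa using sum_sum_pow_three_le (Finset.range (2 ^ K)) (Finset.range (2 ^ M)) a
          fun p _ j _ => ha p j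
    _ = _ := by
        rw [Finset.mul_sum]
        refine Finset.sum_congr rfl fun p _ => ?_
        rw [← setIntegral_dyadicInterval_eq_sum K p M hint.integrableOn, ← mul_assoc,
          Finset.mul_sum]
        refine Finset.sum_congr rfl fun j hj => ?_
        rw [setIntegral_mul_dyadicAvg_mul_dyadicAvg f K p (Finset.mem_range.1 hj),
          zpow_add₀ two_ne_zero, zpow_natCast, zpow_natCast]
        push_cast
        ring

theorem stmt1 (f : ℝ → ℝ) (hnn : ∀ x, 0 ≤ f x) (hint : Integrable f)
    (hsupp : Function.support f ⊆ Set.Icc 0 1)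
    (k l : ℤ) (hk : 0 ≤ k) (hkl : k ≤ l) :
    (∫ x in Set.Icc (0 : ℝ) 1, f x) ^ 3 ≤
      ∫ x in Set.Icc (0 : ℝ) 1, f x * dyadicAvg k f x * dyadicAvg l f x :=
  stmt1_general f hnn hint k l hk hkl
end

section
/- There exists a constant c₀ > 0, depending only on the choice of bump function ϑ, such that for every nonnegative integrable function f supported on [0,1] and all k, ℓ ∈ ℤ_{≥0}, one has ∫_0^1 f(x) (f ∗ ϑ_k)(x) (f ∗ ϑ_ℓ)(x) dx ≥ c₀ (∫_0^1 f)³. -/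
open MeasureTheory Set

private lemma sum_pieces (F : ℝ → ℝ) (hF : Integrable F) (e : ℕ → ℝ)
    (he : ∀ j, e j ≤ e (j + 1)) (n : ℕ) :
    ∑ j ∈ Finset.range n, ∫ t in Set.Ico (e j) (e (j + 1)), F t
      = ∫ t in Set.Ico (e 0) (e n), F t := by
  have h1 : ∀ u v : ℝ, u ≤ v → ∫ t in Set.Ico u v, F t = ∫ t in u..v, F t := by
    intro u v huv
    rw [intervalIntegral.integral_of_le huv, integral_Ico_eq_integral_Ioo,
      integral_Ioc_eq_integral_Ioo]
  rw [h1 _ _ ((monotone_nat_of_le_succ he) (Nat.zero_le n)),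
    ← intervalIntegral.sum_integral_adjacent_intervals (fun j _ => hF.intervalIntegrable)]
  exact Finset.sum_congr rfl fun j _ => h1 _ _ (he j)

theorem stmt2 (ϑ : ℝ → ℝ) (hsmooth : ContDiff ℝ (⊤ : ℕ∞) ϑ) (hnn : ∀ x, 0 ≤ ϑ x)
    (heven : ∀ x, ϑ (-x) = ϑ x)
    (hsupp : Function.support ϑ ⊆ Set.Icc (-2) 2)
    (hconst : ∀ x ∈ Set.Icc (-1 : ℝ) 1, ϑ x = ϑ 0)
    (hmono : AntitoneOn ϑ (Set.Icc 1 2))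
    (hnorm : ∫ x, ϑ x = 1) :
    ∃ c₀ > (0 : ℝ), ∀ f : ℝ → ℝ, (∀ x, 0 ≤ f x) → Integrable f →
      Function.support f ⊆ Set.Icc 0 1 → ∀ k l : ℕ,
      c₀ * (∫ x in Set.Icc (0 : ℝ) 1, f x) ^ 3 ≤
        ∫ x in Set.Icc (0 : ℝ) 1,
          f x * (∫ y, f (x - y) * ((2 : ℝ) ^ k * ϑ ((2 : ℝ) ^ k * y)))
              * (∫ y, f (x - y) * ((2 : ℝ) ^ l * ϑ ((2 : ℝ) ^ l * y))) := by
  classical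
  have hθc : Continuous ϑ := hsmooth.continuous
  have hθbd : ∀ x, ϑ x ≤ ϑ 0 := by
    intro x
    have h0 : ϑ |x| = ϑ x := by
      rcases abs_cases x with ⟨h, _⟩ | ⟨h, _⟩
      · rw [h]
      · rw [h, heven]
    rw [← h0]
    rcases le_or_gt |x| 1 with h1 | h1
    · exact le_of_eq (hconst |x| ⟨by linarith [abs_nonneg x], h1⟩)
    rcases le_or_gt |x| 2 with h2 | h2
    · calc ϑ |x| ≤ ϑ 1 := hmono ⟨le_refl 1, one_le_two⟩ ⟨h1.le, h2⟩ h1.le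
        _ = ϑ 0 := hconst 1 ⟨by norm_num, le_refl 1⟩
    · have hz : ϑ |x| = 0 := by
        by_contra hne
        have hmem := hsupp (Function.mem_support.mpr hne)
        exact absurd hmem.2 (not_le.mpr h2)
      rw [hz]; exact hnn 0
  have hθ0 : 0 < ϑ 0 := by
    rcases lt_or_ge 0 (ϑ 0) with h | h
    · exact h
    exfalso
    have hz : ϑ = fun _ => (0 : ℝ) := funext fun x => le_antisymm ((hθbd x).trans h) (hnn x)
    rw [hz] at hnorm
    simp at hnorm
  refine ⟨(ϑ 0) ^ 2, by positivity, ?_⟩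
  intro f hfnn hfint hfsupp
  have h2pos : ∀ p : ℕ, (0 : ℝ) < 2 ^ p := fun p => by positivity
  -- integrability of the convolution integrand
  have hint1 : ∀ (p : ℕ) (x : ℝ),
      Integrable (fun y => f (x - y) * ((2 : ℝ) ^ p * ϑ ((2 : ℝ) ^ p * y))) := by
    intro p x
    have h1 : Integrable (fun y => f (x - y)) := hfint.comp_sub_left x
    have hb : ∃ C, ∀ y : ℝ, ‖(2 : ℝ) ^ p * ϑ ((2 : ℝ) ^ p * y)‖ ≤ C := by
      refine ⟨2 ^ p * ϑ 0, fun y => ?_⟩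
      rw [Real.norm_eq_abs, abs_of_nonneg (mul_nonneg (h2pos p).le (hnn _))]
      exact mul_le_mul_of_nonneg_left (hθbd _) (h2pos p).le
    have h2 := h1.bdd_mul ((continuous_const.mul
      (hθc.comp (continuous_const.mul continuous_id))).aestronglyMeasurable) (ae_of_all _ hb.choose_spec)
    exact h2.congr (ae_of_all _ fun y => by simp [mul_comm])
  -- nonnegativity of the convolution
  have hgnn : ∀ (p : ℕ) (x : ℝ),
      0 ≤ ∫ y, f (x - y) * ((2 : ℝ) ^ p * ϑ ((2 : ℝ) ^ p * y)) := fun p x =>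
    integral_nonneg fun y => mul_nonneg (hfnn _) (mul_nonneg (h2pos p).le (hnn _))
  -- upper bound of the convolution
  have hgub : ∀ (p : ℕ) (x : ℝ),
      (∫ y, f (x - y) * ((2 : ℝ) ^ p * ϑ ((2 : ℝ) ^ p * y))) ≤ 2 ^ p * ϑ 0 * ∫ y, f y := by
    intro p x
    calc (∫ y, f (x - y) * ((2 : ℝ) ^ p * ϑ ((2 : ℝ) ^ p * y)))
        ≤ ∫ y, f (x - y) * (2 ^ p * ϑ 0) := by
          refine integral_mono (hint1 p x) ((hfint.comp_sub_left x).mul_const _) fun y => ?_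
          exact mul_le_mul_of_nonneg_left
            (mul_le_mul_of_nonneg_left (hθbd _) (h2pos p).le) (hfnn _)
      _ = (∫ y, f (x - y)) * (2 ^ p * ϑ 0) := integral_mul_const _ _
      _ = 2 ^ p * ϑ 0 * ∫ y, f y := by
          rw [integral_sub_left_eq_self f volume x]; ring
  -- continuity of the convolution
  have hgcont : ∀ p : ℕ,
      Continuous (fun x => ∫ y, f (x - y) * ((2 : ℝ) ^ p * ϑ ((2 : ℝ) ^ p * y))) := by
    intro p
    set θp : ℝ → ℝ := fun y => (2 : ℝ) ^ p * ϑ ((2 : ℝ) ^ p * y) with hθp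
    have hθpc : Continuous θp := continuous_const.mul (hθc.comp (continuous_const.mul continuous_id))
    have hθpcs : HasCompactSupport θp := by
      refine HasCompactSupport.intro (isCompact_Icc (a := (-2 : ℝ)) (b := 2)) fun y hy => ?_
      simp only [hθp]
      have hz : ϑ ((2 : ℝ) ^ p * y) = 0 := by
        by_contra hne
        have hmem := hsupp (Function.mem_support.mpr hne)
        simp only [Set.mem_Icc, not_and, not_le] at hy hmem
        have h1 : (1 : ℝ) ≤ 2 ^ p := one_le_pow₀ (by norm_num)
        rcases le_or_gt (-2 : ℝ) y with hy1 | hy1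
        · have := hy hy1
          nlinarith [hmem.2]
        · nlinarith [hmem.1]
      rw [hz, mul_zero]
    have hcont := hθpcs.continuous_convolution_left (ContinuousLinearMap.mul ℝ ℝ) hθpc
      hfint.locallyIntegrable
    refine hcont.congr fun x => ?_
    rw [convolution_def]
    exact integral_congr_ae (ae_of_all _ fun t => by
      simp only [ContinuousLinearMap.mul_apply']; ring)
  -- global integrability of the triple product
  have hFint : ∀ p q : ℕ, Integrable (fun x =>
      f x * (∫ y, f (x - y) * ((2 : ℝ) ^ p * ϑ ((2 : ℝ) ^ p * y)))
          * (∫ y, f (x - y) * ((2 : ℝ) ^ q * ϑ ((2 : ℝ) ^ q * y)))) := by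
    intro p q
    refine Integrable.mono' (g := fun x => (2 ^ p * ϑ 0 * ∫ y, f y) * (2 ^ q * ϑ 0 * ∫ y, f y) * f x)
      ((hfint.const_mul _)) ?_ (ae_of_all _ fun x => ?_)
    · exact (hfint.aestronglyMeasurable.mul (hgcont p).aestronglyMeasurable).mul
        (hgcont q).aestronglyMeasurable
    · rw [Real.norm_eq_abs, abs_of_nonneg
        (mul_nonneg (mul_nonneg (hfnn x) (hgnn p x)) (hgnn q x))]
      have h1 := hgub p x
      have h2 := hgub q x
      have h3 := hgnn p x
      have h4 := hgnn q x
      have h5 := hfnn x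
      have h6 : (0:ℝ) ≤ 2 ^ p * ϑ 0 * ∫ y, f y := by
        have h7 : (0:ℝ) ≤ ∫ y, f y := integral_nonneg hfnn
        positivity
      show f x * _ * _ ≤ (2 ^ p * ϑ 0 * ∫ y, f y) * (2 ^ q * ϑ 0 * ∫ y, f y) * f x
      calc f x * (∫ y, f (x - y) * ((2 : ℝ) ^ p * ϑ ((2 : ℝ) ^ p * y)))
            * (∫ y, f (x - y) * ((2 : ℝ) ^ q * ϑ ((2 : ℝ) ^ q * y)))
          ≤ f x * (2 ^ p * ϑ 0 * ∫ y, f y)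
            * (∫ y, f (x - y) * ((2 : ℝ) ^ q * ϑ ((2 : ℝ) ^ q * y))) :=
            mul_le_mul_of_nonneg_right (mul_le_mul_of_nonneg_left h1 h5) h4
        _ ≤ f x * (2 ^ p * ϑ 0 * ∫ y, f y) * (2 ^ q * ϑ 0 * ∫ y, f y) :=
            mul_le_mul_of_nonneg_left h2 (mul_nonneg h5 h6)
        _ = (2 ^ p * ϑ 0 * ∫ y, f y) * (2 ^ q * ϑ 0 * ∫ y, f y) * f x := by ring
  -- key pointwise lower bound for the convolution
  have hkey : ∀ (p : ℕ) (u x : ℝ), u ≤ x → x ≤ u + ((2 : ℝ) ^ p)⁻¹ →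
      ϑ 0 * 2 ^ p * ∫ t in Set.Ico u (u + ((2 : ℝ) ^ p)⁻¹), f t
        ≤ ∫ y, f (x - y) * ((2 : ℝ) ^ p * ϑ ((2 : ℝ) ^ p * y)) := by
    intro p u x hux hxu
    set c : ℝ := ((2 : ℝ) ^ p)⁻¹ with hc
    have hc0 : 0 < c := by positivity
    have h1 : ∫ y in Set.Icc (-c) c, f (x - y) * ((2 : ℝ) ^ p * ϑ ((2 : ℝ) ^ p * y))
        ≤ ∫ y, f (x - y) * ((2 : ℝ) ^ p * ϑ ((2 : ℝ) ^ p * y)) :=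
      setIntegral_le_integral (hint1 p x)
        (ae_of_all _ fun y => mul_nonneg (hfnn _) (mul_nonneg (h2pos p).le (hnn _)))
    have h2 : ∫ y in Set.Icc (-c) c, f (x - y) * ((2 : ℝ) ^ p * ϑ ((2 : ℝ) ^ p * y))
        = ∫ y in Set.Icc (-c) c, f (x - y) * (2 ^ p * ϑ 0) := by
      refine setIntegral_congr_fun measurableSet_Icc fun y hy => ?_
      have hcc : (2:ℝ) ^ p * c = 1 := by
        rw [hc]; field_simp
      have hy1 : -(1:ℝ) ≤ 2 ^ p * y := by
        have h := mul_le_mul_of_nonneg_left hy.1 (h2pos p).le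
        rw [mul_neg, hcc] at h; linarith
      have hy2 : (2:ℝ) ^ p * y ≤ 1 := by
        have h := mul_le_mul_of_nonneg_left hy.2 (h2pos p).le
        rw [hcc] at h; linarith
      rw [hconst _ ⟨hy1, hy2⟩]
    have h3 : ∫ y in Set.Icc (-c) c, f (x - y) = ∫ t in Set.Icc (x - c) (x + c), f t := by
      have hind : ∀ y : ℝ, (Set.Icc (-c) c).indicator (fun y => f (x - y)) y
          = (Set.Icc (x - c) (x + c)).indicator f (x - y) := by
        intro y
        by_cases hy : y ∈ Set.Icc (-c) c
        · rw [Set.indicator_of_mem hy, Set.indicator_of_mem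
            (show x - y ∈ Set.Icc (x - c) (x + c) from ⟨by linarith [hy.2], by linarith [hy.1]⟩)]
        · rw [Set.indicator_of_notMem hy, Set.indicator_of_notMem]
          intro hmem
          exact hy ⟨by linarith [hmem.2], by linarith [hmem.1]⟩
      calc ∫ y in Set.Icc (-c) c, f (x - y)
          = ∫ y, (Set.Icc (-c) c).indicator (fun y => f (x - y)) y :=
            (integral_indicator measurableSet_Icc).symm
        _ = ∫ y, (Set.Icc (x - c) (x + c)).indicator f (x - y) :=
            integral_congr_ae (ae_of_all _ hind)
        _ = ∫ t, (Set.Icc (x - c) (x + c)).indicator f t :=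
            integral_sub_left_eq_self _ volume x
        _ = ∫ t in Set.Icc (x - c) (x + c), f t := integral_indicator measurableSet_Icc
    have h4 : ∫ t in Set.Ico u (u + c), f t ≤ ∫ t in Set.Icc (x - c) (x + c), f t := by
      refine setIntegral_mono_set hfint.integrableOn (ae_of_all _ fun t => hfnn t)
        (HasSubset.Subset.eventuallyLE fun t ht => ?_)
      exact ⟨by rcases ht with ⟨ht1, ht2⟩; linarith, by rcases ht with ⟨ht1, ht2⟩; linarith⟩
    calc ϑ 0 * 2 ^ p * ∫ t in Set.Ico u (u + c), f t
        ≤ ϑ 0 * 2 ^ p * ∫ t in Set.Icc (x - c) (x + c), f t :=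
          mul_le_mul_of_nonneg_left h4 (by positivity)
      _ = (∫ y in Set.Icc (-c) c, f (x - y)) * (2 ^ p * ϑ 0) := by rw [h3]; ring
      _ = ∫ y in Set.Icc (-c) c, f (x - y) * (2 ^ p * ϑ 0) := (integral_mul_const _ _).symm
      _ = ∫ y in Set.Icc (-c) c, f (x - y) * ((2 : ℝ) ^ p * ϑ ((2 : ℝ) ^ p * y)) := h2.symm
      _ ≤ ∫ y, f (x - y) * ((2 : ℝ) ^ p * ϑ ((2 : ℝ) ^ p * y)) := h1
  -- the main inequality, assuming k ≤ l
  have main : ∀ k l : ℕ, k ≤ l →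
      ϑ 0 ^ 2 * (∫ x in Set.Icc (0 : ℝ) 1, f x) ^ 3 ≤
        ∫ x in Set.Icc (0 : ℝ) 1,
          f x * (∫ y, f (x - y) * ((2 : ℝ) ^ k * ϑ ((2 : ℝ) ^ k * y)))
              * (∫ y, f (x - y) * ((2 : ℝ) ^ l * ϑ ((2 : ℝ) ^ l * y))) := by
    intro k l hkl
    set m := l - k with hmdef
    have hlm : l = k + m := by omega
    have hl2 : (2 : ℝ) ^ l = 2 ^ k * 2 ^ m := by rw [hlm, pow_add]
    have hln : 2 ^ l = 2 ^ k * 2 ^ m := by rw [hlm, pow_add]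
    have hmpos : 0 < 2 ^ m := Nat.pow_pos (by norm_num)
    set e : ℕ → ℝ := fun j => (j : ℝ) / 2 ^ l with he
    set d : ℕ → ℝ := fun i => (i : ℝ) / 2 ^ k with hd
    have hestep : ∀ j : ℕ, e (j + 1) = e j + ((2 : ℝ) ^ l)⁻¹ := by
      intro j; simp only [he]; push_cast; ring
    have hdstep : ∀ i : ℕ, d (i + 1) = d i + ((2 : ℝ) ^ k)⁻¹ := by
      intro i; simp only [hd]; push_cast; ring
    have hemono : ∀ j : ℕ, e j ≤ e (j + 1) := fun j => by
      rw [hestep]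
      have : (0:ℝ) < ((2:ℝ)^l)⁻¹ := by positivity
      linarith
    have hdmono : ∀ i : ℕ, d i ≤ d (i + 1) := fun i => by
      rw [hdstep]
      have : (0:ℝ) < ((2:ℝ)^k)⁻¹ := by positivity
      linarith
    set b : ℕ → ℝ := fun j => ∫ t in Set.Ico (e j) (e (j + 1)), f t with hb
    set a : ℕ → ℝ := fun i => ∫ t in Set.Ico (d i) (d (i + 1)), f t with ha
    have hbnn : ∀ j, 0 ≤ b j := fun j =>
      setIntegral_nonneg measurableSet_Ico fun t _ => hfnn t
    have hann : ∀ i, 0 ≤ a i := fun i =>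
      setIntegral_nonneg measurableSet_Ico fun t _ => hfnn t
    -- block sums
    have hblock : ∀ i : ℕ, ∑ r ∈ Finset.range (2 ^ m), b (i * 2 ^ m + r) = a i := by
      intro i
      have h0 : e (i * 2 ^ m + 0) = d i := by
        simp only [he, hd, Nat.add_zero]
        push_cast
        rw [hl2, div_eq_div_iff (by positivity) (by positivity)]
        ring
      have h1 : e (i * 2 ^ m + 2 ^ m) = d (i + 1) := by
        simp only [he, hd]
        push_cast
        rw [hl2, div_eq_div_iff (by positivity) (by positivity)]
        ring
      calc ∑ r ∈ Finset.range (2 ^ m), b (i * 2 ^ m + r)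
          = ∑ r ∈ Finset.range (2 ^ m),
              ∫ t in Set.Ico (e (i * 2 ^ m + r)) (e (i * 2 ^ m + (r + 1))), f t :=
            Finset.sum_congr rfl fun r _ => by simp only [hb, Nat.add_assoc]
        _ = ∫ t in Set.Ico (e (i * 2 ^ m + 0)) (e (i * 2 ^ m + 2 ^ m)), f t :=
            sum_pieces f hfint (fun r => e (i * 2 ^ m + r)) (fun r => hemono _) (2 ^ m)
        _ = a i := by rw [h0, h1]
    have hasum : ∑ i ∈ Finset.range (2 ^ k), a i = ∫ t in Set.Ico (0 : ℝ) 1, f t := by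
      have h0 : d 0 = 0 := by simp [hd]
      have h1 : d (2 ^ k) = 1 := by
        simp only [hd]
        push_cast
        exact div_self (ne_of_gt (h2pos k))
      calc ∑ i ∈ Finset.range (2 ^ k), a i
          = ∑ i ∈ Finset.range (2 ^ k), ∫ t in Set.Ico (d i) (d (i + 1)), f t :=
            Finset.sum_congr rfl fun i _ => by simp only [ha]
        _ = ∫ t in Set.Ico (d 0) (d (2 ^ k)), f t := sum_pieces f hfint d hdmono (2 ^ k)
        _ = ∫ t in Set.Ico (0 : ℝ) 1, f t := by rw [h0, h1]
    -- per-piece lower bound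
    have hpiece : ∀ j ∈ Finset.range (2 ^ l),
        ϑ 0 ^ 2 * 2 ^ k * 2 ^ l * (a (j / 2 ^ m) * (b j * b j)) ≤
          ∫ x in Set.Ico (e j) (e (j + 1)),
            f x * (∫ y, f (x - y) * ((2 : ℝ) ^ k * ϑ ((2 : ℝ) ^ k * y)))
                * (∫ y, f (x - y) * ((2 : ℝ) ^ l * ϑ ((2 : ℝ) ^ l * y))) := by
      intro j _
      have hdle : d (j / 2 ^ m) ≤ e j := by
        have hnat : ((j / 2 ^ m : ℕ) : ℝ) * 2 ^ m ≤ (j : ℝ) := by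
          exact_mod_cast Nat.div_mul_le_self j (2 ^ m)
        simp only [hd, he]
        rw [hl2, div_le_div_iff₀ (by positivity) (by positivity)]
        calc ((j / 2 ^ m : ℕ) : ℝ) * (2 ^ k * 2 ^ m)
            = ((j / 2 ^ m : ℕ) : ℝ) * 2 ^ m * 2 ^ k := by ring
          _ ≤ (j : ℝ) * 2 ^ k := mul_le_mul_of_nonneg_right hnat (h2pos k).le
      have heled : e (j + 1) ≤ d (j / 2 ^ m + 1) := by
        have hnat : j + 1 ≤ (j / 2 ^ m + 1) * 2 ^ m := by
          have h := Nat.lt_div_mul_add (a := j) hmpos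
          calc j + 1 ≤ j / 2 ^ m * 2 ^ m + 2 ^ m := h
            _ = (j / 2 ^ m + 1) * 2 ^ m := by ring
        have hnat' : ((j : ℝ) + 1) ≤ (((j / 2 ^ m : ℕ) : ℝ) + 1) * 2 ^ m := by
          exact_mod_cast hnat
        simp only [hd, he]
        rw [hl2, div_le_div_iff₀ (by positivity) (by positivity)]
        push_cast
        calc ((j:ℝ) + 1) * 2 ^ k ≤ (((j / 2 ^ m : ℕ) : ℝ) + 1) * 2 ^ m * 2 ^ k :=
              mul_le_mul_of_nonneg_right hnat' (h2pos k).le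
          _ = (((j / 2 ^ m : ℕ) : ℝ) + 1) * (2 ^ k * 2 ^ m) := by ring
      have hbj : b j = ∫ t in Set.Ico (e j) (e j + ((2:ℝ)^l)⁻¹), f t := by
        simp only [hb]
        rw [hestep j]
      have haj : a (j / 2 ^ m) =
          ∫ t in Set.Ico (d (j / 2 ^ m)) (d (j / 2 ^ m) + ((2:ℝ)^k)⁻¹), f t := by
        simp only [ha]
        rw [hdstep]
      calc ϑ 0 ^ 2 * 2 ^ k * 2 ^ l * (a (j / 2 ^ m) * (b j * b j))
          = ∫ x in Set.Ico (e j) (e (j + 1)),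
              (ϑ 0 * 2 ^ k * a (j / 2 ^ m)) * (ϑ 0 * 2 ^ l * b j) * f x := by
            rw [integral_const_mul]
            have hbb : (∫ x in Set.Ico (e j) (e (j + 1)), f x) = b j := by simp only [hb]
            rw [hbb]; ring
        _ ≤ ∫ x in Set.Ico (e j) (e (j + 1)),
              f x * (∫ y, f (x - y) * ((2 : ℝ) ^ k * ϑ ((2 : ℝ) ^ k * y)))
                  * (∫ y, f (x - y) * ((2 : ℝ) ^ l * ϑ ((2 : ℝ) ^ l * y))) := by
            refine setIntegral_mono_on ((hfint.const_mul _).integrableOn)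
              ((hFint k l).integrableOn) measurableSet_Ico fun x hx => ?_
            have hxl : e j ≤ x := hx.1
            have hxr : x ≤ e j + ((2:ℝ)^l)⁻¹ := by
              rw [← hestep j]; exact hx.2.le
            have hgl : ϑ 0 * 2 ^ l * b j ≤
                ∫ y, f (x - y) * ((2 : ℝ) ^ l * ϑ ((2 : ℝ) ^ l * y)) := by
              rw [hbj]; exact hkey l (e j) x hxl hxr
            have hgk : ϑ 0 * 2 ^ k * a (j / 2 ^ m) ≤
                ∫ y, f (x - y) * ((2 : ℝ) ^ k * ϑ ((2 : ℝ) ^ k * y)) := by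
              rw [haj]
              refine hkey k (d (j / 2 ^ m)) x (hdle.trans hxl) ?_
              rw [← hdstep]
              exact hx.2.le.trans heled
            have hC1 : (0:ℝ) ≤ ϑ 0 * 2 ^ k * a (j / 2 ^ m) := by
              have := hann (j / 2 ^ m); positivity
            have hC2 : (0:ℝ) ≤ ϑ 0 * 2 ^ l * b j := by
              have := hbnn j; positivity
            calc (ϑ 0 * 2 ^ k * a (j / 2 ^ m)) * (ϑ 0 * 2 ^ l * b j) * f x
                = (f x * (ϑ 0 * 2 ^ k * a (j / 2 ^ m))) * (ϑ 0 * 2 ^ l * b j) := by ring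
              _ ≤ (f x * (∫ y, f (x - y) * ((2 : ℝ) ^ k * ϑ ((2 : ℝ) ^ k * y))))
                  * (∫ y, f (x - y) * ((2 : ℝ) ^ l * ϑ ((2 : ℝ) ^ l * y))) :=
                  mul_le_mul (mul_le_mul_of_nonneg_left hgk (hfnn x)) hgl hC2
                    (mul_nonneg (hfnn x) (hgnn k x))
    -- reindexing
    have hreindex : ∑ j ∈ Finset.range (2 ^ l), a (j / 2 ^ m) * (b j * b j)
        = ∑ i ∈ Finset.range (2 ^ k), ∑ r ∈ Finset.range (2 ^ m),
            a i * (b (i * 2 ^ m + r) * b (i * 2 ^ m + r)) := by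
      rw [← Finset.sum_product']
      refine Finset.sum_nbij' (i := fun j => (j / 2 ^ m, j % 2 ^ m))
        (j := fun p => p.1 * 2 ^ m + p.2) ?_ ?_ ?_ ?_ ?_
      · intro j hj
        simp only [Finset.mem_range, Finset.mem_product] at hj ⊢
        rw [hln] at hj
        exact ⟨(Nat.div_lt_iff_lt_mul hmpos).2 hj, Nat.mod_lt _ hmpos⟩
      · intro p hp
        simp only [Finset.mem_range, Finset.mem_product] at hp ⊢
        rw [hln]
        calc p.1 * 2 ^ m + p.2 < p.1 * 2 ^ m + 2 ^ m := by omega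
          _ = (p.1 + 1) * 2 ^ m := by ring
          _ ≤ 2 ^ k * 2 ^ m := Nat.mul_le_mul_right _ hp.1
      · intro j _
        exact Nat.div_add_mod' j (2 ^ m)
      · intro p hp
        simp only [Finset.mem_range, Finset.mem_product] at hp
        have h1 : (p.1 * 2 ^ m + p.2) / 2 ^ m = p.1 := by
          rw [mul_comm, Nat.mul_add_div hmpos, Nat.div_eq_of_lt hp.2, Nat.add_zero]
        have h2 : (p.1 * 2 ^ m + p.2) % 2 ^ m = p.2 := Nat.mul_add_mod_of_lt hp.2
        rw [h1, h2]
      · intro j _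
        have h := Nat.div_add_mod' j (2 ^ m)
        simp only
        rw [h]
    -- Cauchy–Schwarz within blocks
    have hCS : ∀ i ∈ Finset.range (2 ^ k),
        a i ^ 3 / 2 ^ m ≤
          ∑ r ∈ Finset.range (2 ^ m), a i * (b (i * 2 ^ m + r) * b (i * 2 ^ m + r)) := by
      intro i _
      rw [← Finset.mul_sum]
      have h1 : (∑ r ∈ Finset.range (2 ^ m), b (i * 2 ^ m + r)) ^ 2 / ((2:ℝ) ^ m) ≤
          ∑ r ∈ Finset.range (2 ^ m), b (i * 2 ^ m + r) ^ 2 := by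
        have h := pow_sum_div_card_le_sum_pow (s := Finset.range (2 ^ m))
          (f := fun r => b (i * 2 ^ m + r)) (fun r _ => hbnn _) 1
        simpa using h
      rw [hblock i] at h1
      calc a i ^ 3 / 2 ^ m = a i * (a i ^ 2 / 2 ^ m) := by ring
        _ ≤ a i * ∑ r ∈ Finset.range (2 ^ m), b (i * 2 ^ m + r) ^ 2 :=
            mul_le_mul_of_nonneg_left h1 (hann i)
        _ = a i * ∑ r ∈ Finset.range (2 ^ m), b (i * 2 ^ m + r) * b (i * 2 ^ m + r) := by
            congr 1
            exact Finset.sum_congr rfl fun r _ => by ring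
    -- Jensen at the coarse scale
    have hJ : (∫ t in Set.Ico (0:ℝ) 1, f t) ^ 3 / ((2:ℝ) ^ k) ^ 2 ≤
        ∑ i ∈ Finset.range (2 ^ k), a i ^ 3 := by
      have h := pow_sum_div_card_le_sum_pow (s := Finset.range (2 ^ k))
        (f := a) (fun i _ => hann i) 2
      rw [hasum] at h
      simpa using h
    -- splitting the full integral
    have hsplit : ∫ x in Set.Icc (0:ℝ) 1,
        f x * (∫ y, f (x - y) * ((2 : ℝ) ^ k * ϑ ((2 : ℝ) ^ k * y)))
            * (∫ y, f (x - y) * ((2 : ℝ) ^ l * ϑ ((2 : ℝ) ^ l * y)))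
        = ∑ j ∈ Finset.range (2 ^ l), ∫ x in Set.Ico (e j) (e (j + 1)),
            f x * (∫ y, f (x - y) * ((2 : ℝ) ^ k * ϑ ((2 : ℝ) ^ k * y)))
                * (∫ y, f (x - y) * ((2 : ℝ) ^ l * ϑ ((2 : ℝ) ^ l * y))) := by
      have h := sum_pieces (fun x =>
        f x * (∫ y, f (x - y) * ((2 : ℝ) ^ k * ϑ ((2 : ℝ) ^ k * y)))
            * (∫ y, f (x - y) * ((2 : ℝ) ^ l * ϑ ((2 : ℝ) ^ l * y))))
        (hFint k l) e hemono (2 ^ l)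
      have h0 : e 0 = 0 := by simp [he]
      have h1 : e (2 ^ l) = 1 := by
        simp only [he]
        push_cast
        exact div_self (ne_of_gt (h2pos l))
      rw [h0, h1] at h
      rw [integral_Icc_eq_integral_Ico]
      exact h.symm
    rw [integral_Icc_eq_integral_Ico (f := f)]
    calc ϑ 0 ^ 2 * (∫ x in Set.Ico (0:ℝ) 1, f x) ^ 3
        = ϑ 0 ^ 2 * 2 ^ k * 2 ^ l *
            (((∫ x in Set.Ico (0:ℝ) 1, f x) ^ 3 / ((2:ℝ) ^ k) ^ 2) / 2 ^ m) := by
          rw [hl2]; field_simp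
      _ ≤ ϑ 0 ^ 2 * 2 ^ k * 2 ^ l *
            ((∑ i ∈ Finset.range (2 ^ k), a i ^ 3) / 2 ^ m) := by
          refine mul_le_mul_of_nonneg_left ?_ (by positivity)
          gcongr
      _ ≤ ϑ 0 ^ 2 * 2 ^ k * 2 ^ l *
            (∑ i ∈ Finset.range (2 ^ k), ∑ r ∈ Finset.range (2 ^ m),
              a i * (b (i * 2 ^ m + r) * b (i * 2 ^ m + r))) := by
          refine mul_le_mul_of_nonneg_left ?_ (by positivity)
          rw [Finset.sum_div]
          exact Finset.sum_le_sum hCS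
      _ = ∑ j ∈ Finset.range (2 ^ l),
            ϑ 0 ^ 2 * 2 ^ k * 2 ^ l * (a (j / 2 ^ m) * (b j * b j)) := by
          rw [← hreindex, Finset.mul_sum]
      _ ≤ ∑ j ∈ Finset.range (2 ^ l), ∫ x in Set.Ico (e j) (e (j + 1)),
            f x * (∫ y, f (x - y) * ((2 : ℝ) ^ k * ϑ ((2 : ℝ) ^ k * y)))
                * (∫ y, f (x - y) * ((2 : ℝ) ^ l * ϑ ((2 : ℝ) ^ l * y))) :=
          Finset.sum_le_sum hpiece
      _ = _ := hsplit.symm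
  intro k l
  rcases le_total k l with h | h
  · exact main k l h
  · have hml := main l k h
    calc ϑ 0 ^ 2 * (∫ x in Set.Icc (0 : ℝ) 1, f x) ^ 3
        ≤ ∫ x in Set.Icc (0 : ℝ) 1,
            f x * (∫ y, f (x - y) * ((2 : ℝ) ^ l * ϑ ((2 : ℝ) ^ l * y)))
                * (∫ y, f (x - y) * ((2 : ℝ) ^ k * ϑ ((2 : ℝ) ^ k * y))) := hml
      _ = _ := integral_congr_ae (ae_of_all _ fun x => by ring)
end

section
/- Let P(t) = t^d + a_{d-1} t^{d-1} + ⋯ + a_1 t be a monic real polynomial of degree d > 1 with no constant term and with all a_r ≠ 0, and let Γ₀ = 2^{100·d!}. For 1 ≤ r ≤ d define 𝒥_r = { k ∈ ℤ : |a_r 2^{kr}| > Γ₀ |a_{r'} 2^{k r'}| for every r' ≠ r }. Then the complement ℤ ∖ ⋃_{1 ≤ r ≤ d} 𝒥_r has cardinality at most 4 d² Γ₀. -/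
/-! At a scale `k` where no monomial dominates, the largest monomial `|a_r 2^{kr}|` is within
the factor `Γ = 2^N` of some other monomial `r'`, so `k` lies in the set of scales where the
monomials `r` and `r'` are `Γ`-comparable. For two such scales `k₁, k₂` and exponents `p < q`,
multiplying the comparabilities gives `2^{(k₂ - k₁)(q - p)} ≤ Γ²`, so `|k₂ - k₁| ≤ 2N`: each
comparability set has at most `4N + 1 ≤ 4Γ` elements, and there are fewer than `d²` pairs. -/

def comparableScales (a : ℕ → ℝ) (Γ : ℝ) (p q : ℕ) : Set ℤ :=
  {k | |a q * (2 : ℝ) ^ (k * q)| ≤ Γ * |a p * (2 : ℝ) ^ (k * p)| ∧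
    |a p * (2 : ℝ) ^ (k * p)| ≤ Γ * |a q * (2 : ℝ) ^ (k * q)|}

lemma abs_mul_two_zpow (c : ℝ) (m : ℤ) : |c * (2 : ℝ) ^ m| = |c| * (2 : ℝ) ^ m := by
  rw [abs_mul, abs_of_pos (zpow_pos two_pos m : (0 : ℝ) < 2 ^ m)]

namespace comparableScales

variable {a : ℕ → ℝ} {Γ : ℝ} {p q : ℕ}

lemma comm : comparableScales a Γ p q = comparableScales a Γ q p :=
  Set.ext fun _ ↦ And.comm

lemma two_zpow_le_sq_mul (hp : a p ≠ 0) (hq : a q ≠ 0) (hΓ : 0 ≤ Γ) {k₁ k₂ : ℤ}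
    (h₁ : k₁ ∈ comparableScales a Γ p q) (h₂ : k₂ ∈ comparableScales a Γ p q) :
    (2 : ℝ) ^ (k₂ * q + k₁ * p) ≤ Γ ^ 2 * 2 ^ (k₂ * p + k₁ * q) := by
  have h := mul_le_mul h₂.1 h₁.2 (by positivity) (by positivity)
  simp only [abs_mul_two_zpow] at h
  have hc : 0 < |a p| * |a q| := by positivity
  rw [← mul_le_mul_iff_right₀ hc]
  calc |a p| * |a q| * (2 : ℝ) ^ (k₂ * q + k₁ * p)
      = |a q| * 2 ^ (k₂ * q) * (|a p| * 2 ^ (k₁ * p)) := by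
        rw [zpow_add₀ two_ne_zero]; ring
    _ ≤ Γ * (|a p| * 2 ^ (k₂ * p)) * (Γ * (|a q| * 2 ^ (k₁ * q))) := h
    _ = |a p| * |a q| * (Γ ^ 2 * 2 ^ (k₂ * p + k₁ * q)) := by
        rw [zpow_add₀ two_ne_zero]; ring

lemma sub_le_of_lt (hp : a p ≠ 0) (hq : a q ≠ 0) (hpq : p < q) {N : ℕ} {k₁ k₂ : ℤ}
    (h₁ : k₁ ∈ comparableScales a (2 ^ N) p q) (h₂ : k₂ ∈ comparableScales a (2 ^ N) p q) :
    k₂ - k₁ ≤ 2 * N := by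
  have h := two_zpow_le_sq_mul hp hq (by positivity) h₁ h₂
  rw [← pow_mul, ← zpow_natCast, ← zpow_add₀ two_ne_zero,
    zpow_le_zpow_iff_right₀ one_lt_two] at h
  have hprod : (k₂ - k₁) * ((q : ℤ) - p) ≤ 2 * N := by push_cast at h; linarith
  have hqp : (1 : ℤ) ≤ q - p := by omega
  nlinarith

lemma subset_Icc (hp : a p ≠ 0) (hq : a q ≠ 0) (hpq : p ≠ q) {N : ℕ} {k₀ : ℤ}
    (hk₀ : k₀ ∈ comparableScales a (2 ^ N) p q) :
    comparableScales a (2 ^ N) p q ⊆ Set.Icc (k₀ - 2 * N) (k₀ + 2 * N) := by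
  rcases hpq.lt_or_gt with hpq | hqp
  · exact fun k hk ↦ ⟨by linarith [sub_le_of_lt hp hq hpq hk hk₀],
      by linarith [sub_le_of_lt hp hq hpq hk₀ hk]⟩
  · rw [comm] at hk₀ ⊢
    exact fun k hk ↦ ⟨by linarith [sub_le_of_lt hq hp hqp hk hk₀],
      by linarith [sub_le_of_lt hq hp hqp hk₀ hk]⟩

lemma finite_and_ncard_le (hp : a p ≠ 0) (hq : a q ≠ 0) (hpq : p ≠ q) (N : ℕ) :
    (comparableScales a (2 ^ N) p q).Finite ∧
      (comparableScales a (2 ^ N) p q).ncard ≤ 4 * N + 1 := by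
  rcases (comparableScales a (2 ^ N) p q).eq_empty_or_nonempty with h | ⟨k₀, hk₀⟩
  · simp [h]
  have hsub := subset_Icc hp hq hpq hk₀
  refine ⟨(Set.finite_Icc _ _).subset hsub, ?_⟩
  calc _ ≤ (Set.Icc (k₀ - 2 * N) (k₀ + 2 * N)).ncard :=
        Set.ncard_le_ncard hsub (Set.finite_Icc _ _)
    _ = 4 * N + 1 := by rw [Set.ncard_eq_toFinset_card', Set.toFinset_Icc, Int.card_Icc]; omega

end comparableScales

lemma exists_mem_comparableScales_of_not_dominant {a : ℕ → ℝ} {Γ : ℝ} {d : ℕ} {k : ℤ}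
    (hd : 1 ≤ d) (hΓ : 1 ≤ Γ)
    (hk : ¬ ∃ r, 1 ≤ r ∧ r ≤ d ∧ ∀ r', 1 ≤ r' → r' ≤ d → r' ≠ r →
      Γ * |a r' * (2 : ℝ) ^ (k * r')| < |a r * (2 : ℝ) ^ (k * r)|) :
    ∃ pq ∈ (Finset.Icc 1 d).offDiag, k ∈ comparableScales a Γ pq.1 pq.2 := by
  obtain ⟨r, hr, hmax⟩ := Finset.exists_max_image (Finset.Icc 1 d)
    (fun r ↦ |a r * (2 : ℝ) ^ (k * r)|) ⟨1, Finset.mem_Icc.mpr ⟨le_rfl, hd⟩⟩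
  obtain ⟨r', hr'1, hr'd, hr'r, hle⟩ : ∃ r', 1 ≤ r' ∧ r' ≤ d ∧ r' ≠ r ∧
      |a r * (2 : ℝ) ^ (k * r)| ≤ Γ * |a r' * (2 : ℝ) ^ (k * r')| := by
    rw [Finset.mem_Icc] at hr
    push Not at hk
    exact hk r hr.1 hr.2
  have hr' : r' ∈ Finset.Icc 1 d := Finset.mem_Icc.mpr ⟨hr'1, hr'd⟩
  refine ⟨(r, r'), Finset.mem_offDiag.mpr ⟨hr, hr', hr'r.symm⟩, ?_, hle⟩
  exact (hmax r' hr').trans (le_mul_of_one_le_left (abs_nonneg _) hΓ)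

theorem stmt3_general (d : ℕ) (hd : 1 < d) (a : ℕ → ℝ)
    (hne : ∀ r, 1 ≤ r → r ≤ d → a r ≠ 0) :
    {k : ℤ | ¬ ∃ r, 1 ≤ r ∧ r ≤ d ∧ ∀ r', 1 ≤ r' → r' ≤ d → r' ≠ r →
        ((2 : ℝ) ^ (100 * Nat.factorial d)) * |a r' * (2 : ℝ) ^ (k * r')|
          < |a r * (2 : ℝ) ^ (k * r)|}.Finite ∧
    {k : ℤ | ¬ ∃ r, 1 ≤ r ∧ r ≤ d ∧ ∀ r', 1 ≤ r' → r' ≤ d → r' ≠ r →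
        ((2 : ℝ) ^ (100 * Nat.factorial d)) * |a r' * (2 : ℝ) ^ (k * r')|
          < |a r * (2 : ℝ) ^ (k * r)|}.ncard ≤ 4 * d ^ 2 * 2 ^ (100 * Nat.factorial d) := by
  set N := 100 * Nat.factorial d
  set T := (Finset.Icc 1 d).offDiag
  have hJ : ∀ pq ∈ T, (comparableScales a (2 ^ N) pq.1 pq.2).Finite ∧
      (comparableScales a (2 ^ N) pq.1 pq.2).ncard ≤ 4 * N + 1 := by
    intro pq hpq
    obtain ⟨hp, hq, hpq⟩ := Finset.mem_offDiag.mp hpq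
    rw [Finset.mem_Icc] at hp hq
    exact comparableScales.finite_and_ncard_le (hne _ hp.1 hp.2) (hne _ hq.1 hq.2) hpq N
  have hcover : _ ⊆ ⋃ pq ∈ T, comparableScales a (2 ^ N) pq.1 pq.2 := fun k hk ↦ by
    simpa only [Set.mem_iUnion₂, exists_prop] using
      exists_mem_comparableScales_of_not_dominant hd.le (one_le_pow₀ one_le_two) hk
  have hfin := T.finite_toSet.biUnion fun pq hpq ↦ (hJ pq hpq).1
  refine ⟨hfin.subset hcover, ?_⟩
  calc _ ≤ (⋃ pq ∈ T, comparableScales a (2 ^ N) pq.1 pq.2).ncard :=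
        Set.ncard_le_ncard hcover hfin
    _ ≤ ∑ pq ∈ T, (comparableScales a (2 ^ N) pq.1 pq.2).ncard := T.set_ncard_biUnion_le _
    _ ≤ T.card * (4 * N + 1) := Finset.sum_le_card_nsmul _ _ _ fun pq hpq ↦ (hJ pq hpq).2
    _ ≤ d ^ 2 * (4 * 2 ^ N) := by
        gcongr
        · rw [Finset.offDiag_card, Nat.card_Icc, Nat.add_sub_cancel, sq]
          exact Nat.sub_le _ _
        · have := N.lt_two_pow_self; omega
    _ = 4 * d ^ 2 * 2 ^ N := by ring

/-- Li–Xiao lemma: at all but boundedly many dyadic scales, one monomial of the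
polynomial `t^d + a_{d-1} t^{d-1} + ⋯ + a_1 t` dominates all others by the factor
`Γ₀ = 2^(100·d!)`. -/
theorem stmt3 (d : ℕ) (hd : 1 < d) (a : ℕ → ℝ) (had : a d = 1)
    (hne : ∀ r, 1 ≤ r → r ≤ d → a r ≠ 0) :
    {k : ℤ | ¬ ∃ r, 1 ≤ r ∧ r ≤ d ∧ ∀ r', 1 ≤ r' → r' ≤ d → r' ≠ r →
        ((2 : ℝ) ^ (100 * Nat.factorial d)) * |a r' * (2 : ℝ) ^ (k * r')|
          < |a r * (2 : ℝ) ^ (k * r)|}.Finite ∧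
    {k : ℤ | ¬ ∃ r, 1 ≤ r ∧ r ≤ d ∧ ∀ r', 1 ≤ r' → r' ≤ d → r' ≠ r →
        ((2 : ℝ) ^ (100 * Nat.factorial d)) * |a r' * (2 : ℝ) ^ (k * r')|
          < |a r * (2 : ℝ) ^ (k * r)|}.ncard ≤ 4 * d ^ 2 * 2 ^ (100 * Nat.factorial d) :=
  stmt3_general d hd a hne
end

section
/- Let Q be a real polynomial of degree d₀ ≥ 2 and suppose t > 0 is a point where the d₀-th monomial of Q dominates in the strong sense that Q'(t) = d₀ c t^{d₀-1}(1 + e₁), Q''(t) = d₀(d₀-1) c t^{d₀-2}(1 + e₂), Q'''(t) = d₀(d₀-1)(d₀-2) c t^{d₀-3}(1 + e₃) with |e_i| ≤ h for some c ≠ 0 and h ≤ 1/(1000 d₀³). Then 1 − Q'(t)Q'''(t)/(Q''(t))² ≥ 1/(2(d₀−1)). -/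
/-!
With `P = c t^(d₀-2)`, the hypotheses give `Q'Q''' = d₀²(d₀-1)(d₀-2)(1+e₁)(1+e₃)P²` and
`Q''² = d₀²(d₀-1)²(1+e₂)²P²`, so the quotient is `(d₀-2)/(d₀-1)` times a factor
`(1+e₁)(1+e₃)/(1+e₂)² ≤ ((1+h)/(1-h))²`. The gap `1 - (d₀-2)/(d₀-1) = 1/(d₀-1)` absorbs
this error as soon as `d₀ h` is small, leaving at least half of it.
-/

open Polynomial

lemma sub_two_mul_pow_pred_mul_pow_sub_three {R : Type*} [CommRing R] (t : R) {d : ℕ}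
    (hd : 2 ≤ d) :
    ((d : R) - 2) * (t ^ (d - 1) * t ^ (d - 3)) = ((d : R) - 2) * (t ^ (d - 2)) ^ 2 := by
  obtain ⟨_ | n, rfl⟩ := Nat.exists_eq_add_of_le' hd
  · norm_num
  · rw [show n + 1 + 2 - 1 = n + 2 by omega, show n + 1 + 2 - 3 = n by omega,
      show n + 1 + 2 - 2 = n + 1 by omega]
    ring

lemma two_mul_sub_two_mul_le_of_abs_le {D h e₁ e₂ e₃ : ℝ} (hD : 2 ≤ D)
    (hDh : 8 * D * h ≤ 1) (he₁ : |e₁| ≤ h) (he₂ : |e₂| ≤ h) (he₃ : |e₃| ≤ h) :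
    2 * (D - 2) * ((1 + e₁) * (1 + e₃)) ≤ (2 * D - 3) * (1 + e₂) ^ 2 := by
  obtain ⟨l₁, u₁⟩ := abs_le.mp he₁
  obtain ⟨l₂, u₂⟩ := abs_le.mp he₂
  obtain ⟨l₃, u₃⟩ := abs_le.mp he₃
  have hh : 0 ≤ h := (abs_nonneg e₁).trans he₁
  have hh_small : h ≤ 1 / 16 := by nlinarith
  have hupper : (1 + e₁) * (1 + e₃) ≤ (1 + h) ^ 2 := by
    rw [sq]; exact mul_le_mul (by linarith) (by linarith) (by linarith) (by linarith)
  have hlower : (1 - h) ^ 2 ≤ (1 + e₂) ^ 2 := by gcongr <;> linarith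
  -- `(2D - 3)(1 - h)² - 2(D - 2)(1 + h)² = 1 - 2(4D - 7)h + h²`
  calc 2 * (D - 2) * ((1 + e₁) * (1 + e₃)) ≤ 2 * (D - 2) * (1 + h) ^ 2 := by gcongr
    _ ≤ (2 * D - 3) * (1 - h) ^ 2 := by nlinarith
    _ ≤ (2 * D - 3) * (1 + e₂) ^ 2 := by gcongr; linarith

lemma eight_mul_mul_le_one_of_le_one_div {D h : ℝ} (hD : 1 ≤ D) (hh : 0 ≤ h)
    (hDh : h ≤ 1 / (1000 * D ^ 3)) : 8 * D * h ≤ 1 := by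
  have hD3 : D ≤ D ^ 3 := le_self_pow₀ hD (by norm_num)
  rw [le_div_iff₀ (by positivity)] at hDh
  nlinarith

theorem stmt15_general (d₀ : ℕ) (hd₀ : 2 ≤ d₀) (Q : Polynomial ℝ)
    (t c h e₁ e₂ e₃ : ℝ)
    (hh : h ≤ 1 / (1000 * (d₀ : ℝ) ^ 3))
    (he₁ : |e₁| ≤ h) (he₂ : |e₂| ≤ h) (he₃ : |e₃| ≤ h)
    (h1 : (derivative Q).eval t = (d₀ : ℝ) * c * t ^ (d₀ - 1) * (1 + e₁))
    (h2 : (derivative (derivative Q)).eval t =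
      (d₀ : ℝ) * ((d₀ : ℝ) - 1) * c * t ^ (d₀ - 2) * (1 + e₂))
    (h3 : (derivative (derivative (derivative Q))).eval t =
      (d₀ : ℝ) * ((d₀ : ℝ) - 1) * ((d₀ : ℝ) - 2) * c * t ^ (d₀ - 3) * (1 + e₃)) :
    1 / (2 * ((d₀ : ℝ) - 1)) ≤
      1 - (derivative Q).eval t * (derivative (derivative (derivative Q))).eval t /
        ((derivative (derivative Q)).eval t) ^ 2 := by
  have hD : (2 : ℝ) ≤ d₀ := by exact_mod_cast hd₀
  have hDh := eight_mul_mul_le_one_of_le_one_div (by linarith) ((abs_nonneg e₁).trans he₁) hh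
  have hpert := two_mul_sub_two_mul_le_of_abs_le hD hDh he₁ he₂ he₃
  have hscaled := mul_le_mul_of_nonneg_left hpert
    (by positivity : 0 ≤ ((d₀ : ℝ) * (d₀ - 1) * c * t ^ (d₀ - 2)) ^ 2)
  have hpow := sub_two_mul_pow_pred_mul_pow_sub_three t hd₀
  have hD1 : (d₀ : ℝ) - 1 ≠ 0 := by linarith
  have hr : 1 - 1 / (2 * ((d₀ : ℝ) - 1)) = (2 * d₀ - 3) / (2 * (d₀ - 1)) := by
    field_simp; ring
  rw [le_sub_comm, hr]
  refine div_le_of_le_mul₀ (sq_nonneg _) (div_nonneg (by linarith) (by linarith)) ?_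
  rw [div_mul_eq_mul_div, le_div_iff₀ (by linarith), h1, h2, h3]
  linear_combination hscaled + 2 * (d₀ * (d₀ - 1) * c) ^ 2 * (1 + e₁) * (1 + e₃) * hpow

theorem stmt15 (d₀ : ℕ) (hd₀ : 2 ≤ d₀) (Q : Polynomial ℝ) (hdeg : Q.natDegree = d₀)
    (t c h e₁ e₂ e₃ : ℝ) (ht : 0 < t) (hc : c ≠ 0)
    (hh : h ≤ 1 / (1000 * (d₀ : ℝ) ^ 3))
    (he₁ : |e₁| ≤ h) (he₂ : |e₂| ≤ h) (he₃ : |e₃| ≤ h)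
    (h1 : (derivative Q).eval t = (d₀ : ℝ) * c * t ^ (d₀ - 1) * (1 + e₁))
    (h2 : (derivative (derivative Q)).eval t =
      (d₀ : ℝ) * ((d₀ : ℝ) - 1) * c * t ^ (d₀ - 2) * (1 + e₂))
    (h3 : (derivative (derivative (derivative Q))).eval t =
      (d₀ : ℝ) * ((d₀ : ℝ) - 1) * ((d₀ : ℝ) - 2) * c * t ^ (d₀ - 3) * (1 + e₃)) :
    1 / (2 * ((d₀ : ℝ) - 1)) ≤
      1 - (derivative Q).eval t * (derivative (derivative (derivative Q))).eval t /
        ((derivative (derivative Q)).eval t) ^ 2 :=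
  stmt15_general d₀ hd₀ Q t c h e₁ e₂ e₃ hh he₁ he₂ he₃ h1 h2 h3
end
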